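/- Let κ, θ, σ > 0 with α := (4κθ − σ²)/8 ≥ 0, let N ∈ ℕ, and let h : ℕ → ℝ be strictly positive. On a probability space (Ω, F, ℙ) let (ξ_n)_{n∈ℕ} be an independent family of real random variables with ξ_n distributed as the Gaussian measure with mean 0 and variance h(n+1). Define X_0 = x₀ ≥ 0 and X_{n+1} = e^{−κ h(n+1)} (√(X_n + 2α h(n+1)) + (σ/2) ξ_n)². Then for every n, X_n is nonnegative and integrable and the means satisfy the exact recursion E[X_{n+1}] = e^{−κ h(n+1)} ( E[X_n] + κθ h(n+1) ). -/

import Mathlib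

/-!
Write `a = √(X_n + 2αh)` and `s = σ/2`. Since `X_n` is a measurable function of
`ξ_0, …, ξ_{n-1}`, it is independent of the centred variable `ξ_n`, so expanding
`(a + s ξ_n)²` the cross term has mean zero and `E[(a + s ξ_n)²] = E[X_n] + 2αh + s² h`.
The recursion follows from `2α + σ²/4 = κθ`; integrability propagates along the way
because `a` and `ξ_n` are square integrable.
-/

open MeasureTheory ProbabilityTheory

open scoped NNReal

namespace ProbabilityTheory

section Gaussian

variable {Ω : Type*} [MeasurableSpace Ω] {P : Measure Ω} {X : Ω → ℝ} {v : ℝ≥0}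

lemma HasLaw.integral_eq_zero_of_gaussianReal (hX : HasLaw X (gaussianReal 0 v) P) :
    P[X] = 0 :=
  hX.integral_eq.trans integral_id_gaussianReal

lemma HasLaw.integral_sq_of_gaussianReal (hX : HasLaw X (gaussianReal 0 v) P) :
    ∫ ω, X ω ^ 2 ∂P = v := by
  rw [← variance_of_integral_eq_zero hX.aemeasurable hX.integral_eq_zero_of_gaussianReal,
    hX.variance_eq, variance_id_gaussianReal]

end Gaussian

section SplittingStep

variable {Ω : Type*} [MeasurableSpace Ω] {μ : Measure Ω}

lemma memLp_two_sqrt_of_integrable {f : Ω → ℝ} (hf : ∀ ω, 0 ≤ f ω) (hfi : Integrable f μ) :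
    MemLp (fun ω => Real.sqrt (f ω)) 2 μ := by
  refine (memLp_two_iff_integrable_sq
    (Real.continuous_sqrt.comp_aestronglyMeasurable hfi.aestronglyMeasurable)).2 ?_
  simpa only [Real.sq_sqrt (hf _)] using hfi

lemma IndepFun.integral_add_mul_sq [IsFiniteMeasure μ] {a ζ : Ω → ℝ} (hind : IndepFun a ζ μ)
    (ha : MemLp a 2 μ) (hζ : MemLp ζ 2 μ) (hζ0 : μ[ζ] = 0) (s : ℝ) :
    ∫ ω, (a ω + s * ζ ω) ^ 2 ∂μ = ∫ ω, a ω ^ 2 ∂μ + s ^ 2 * ∫ ω, ζ ω ^ 2 ∂μ := by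
  have hcross : ∫ ω, a ω * ζ ω ∂μ = 0 := by
    rw [← Pi.mul_def, hind.integral_mul_eq_mul_integral ha.aestronglyMeasurable
      hζ.aestronglyMeasurable, hζ0, mul_zero]
  have haζ : Integrable (fun ω => a ω * ζ ω) μ := ha.integrable_mul hζ
  calc ∫ ω, (a ω + s * ζ ω) ^ 2 ∂μ
      = ∫ ω, (a ω ^ 2 + 2 * s * (a ω * ζ ω) + s ^ 2 * ζ ω ^ 2) ∂μ := by
        congr 1; ext ω; ring
    _ = ∫ ω, a ω ^ 2 ∂μ + 2 * s * ∫ ω, a ω * ζ ω ∂μ + s ^ 2 * ∫ ω, ζ ω ^ 2 ∂μ := by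
        rw [integral_add, integral_add, integral_const_mul, integral_const_mul]
        · exact ha.integrable_sq
        · exact haζ.const_mul _
        · exact ha.integrable_sq.add (haζ.const_mul _)
        · exact hζ.integrable_sq.const_mul _
    _ = ∫ ω, a ω ^ 2 ∂μ + s ^ 2 * ∫ ω, ζ ω ^ 2 ∂μ := by rw [hcross]; ring

lemma IndepFun.integral_sqrt_add_add_mul_sq [IsProbabilityMeasure μ] {x ζ : Ω → ℝ}
    (hind : IndepFun x ζ μ) (hx : ∀ ω, 0 ≤ x ω) (hxi : Integrable x μ) (hζ : MemLp ζ 2 μ)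
    (hζ0 : μ[ζ] = 0) {d : ℝ} (hd : 0 ≤ d) (s : ℝ) :
    Integrable (fun ω => (Real.sqrt (x ω + d) + s * ζ ω) ^ 2) μ ∧
      ∫ ω, (Real.sqrt (x ω + d) + s * ζ ω) ^ 2 ∂μ =
        (∫ ω, x ω ∂μ) + d + s ^ 2 * ∫ ω, ζ ω ^ 2 ∂μ := by
  have hxd : ∀ ω, 0 ≤ x ω + d := fun ω => add_nonneg (hx ω) hd
  have ha : MemLp (fun ω => Real.sqrt (x ω + d)) 2 μ :=
    memLp_two_sqrt_of_integrable hxd (hxi.add (integrable_const d))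
  have hind' : IndepFun (fun ω => Real.sqrt (x ω + d)) ζ μ :=
    hind.comp (φ := fun y => Real.sqrt (y + d)) (ψ := id) (by fun_prop) measurable_id
  refine ⟨(ha.add (hζ.const_mul s)).integrable_sq, ?_⟩
  rw [hind'.integral_add_mul_sq ha hζ hζ0, integral_congr_ae
    (ae_of_all _ fun ω => Real.sq_sqrt (hxd ω)), integral_add hxi (integrable_const d),
    integral_const, probReal_univ, one_smul]

end SplittingStep

lemma iIndepFun.indepFun_of_measurable_iSup {Ω ι β γ : Type*} [MeasurableSpace Ω]
    {μ : Measure Ω} [MeasurableSpace β] [MeasurableSpace γ] {ξ : ι → Ω → β}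
    (hξ : iIndepFun ξ μ) (hξ_meas : ∀ i, Measurable (ξ i)) {S : Set ι} {n : ι} (hn : n ∉ S)
    {Y : Ω → γ} (hY : Measurable[⨆ i ∈ S, MeasurableSpace.comap (ξ i) ‹_›] Y) :
    IndepFun Y (ξ n) μ := by
  have hST : Disjoint S {n} := Set.disjoint_singleton_right.2 hn
  have h := indep_iSup_of_disjoint (fun i => (hξ_meas i).comap_le)
    ((iIndepFun_iff_iIndep _ _ _).1 hξ) hST
  rw [iSup_singleton] at h
  exact (IndepFun_iff_Indep _ _ _).2 (indep_of_indep_of_le_left h hY.comap_le)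

lemma measurable_iSup_comap_of_eq_rec {Ω β γ : Type*} [MeasurableSpace β] [MeasurableSpace γ]
    {ξ : ℕ → Ω → β} {X : ℕ → Ω → γ} {g : ℕ → γ → β → γ}
    (hg : ∀ n, Measurable (Function.uncurry (g n))) {x₀ : γ} (hX0 : ∀ ω, X 0 ω = x₀)
    (hXrec : ∀ n ω, X (n + 1) ω = g n (X n ω) (ξ n ω)) (n : ℕ) :
    Measurable[⨆ i ∈ Set.Iio n, MeasurableSpace.comap (ξ i) ‹_›] (X n) := by
  induction n with
  | zero =>
    rw [funext hX0]
    exact measurable_const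
  | succ n ih =>
    have hX := ih.mono (biSup_mono fun i hi => hi.trans n.lt_succ_self) le_rfl
    have hξ : Measurable[⨆ i ∈ Set.Iio (n + 1), MeasurableSpace.comap (ξ i) ‹_›] (ξ n) :=
      Measurable.of_comap_le (le_iSup₂_of_le n n.lt_succ_self le_rfl)
    rw [funext (hXrec n)]
    exact (hg n).comp (hX.prodMk hξ)

lemma iIndepFun.indepFun_of_eq_rec {Ω β γ : Type*} [MeasurableSpace Ω] {μ : Measure Ω}
    [MeasurableSpace β] [MeasurableSpace γ] {ξ : ℕ → Ω → β} (hξ : iIndepFun ξ μ)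
    (hξ_meas : ∀ i, Measurable (ξ i)) {X : ℕ → Ω → γ} {g : ℕ → γ → β → γ}
    (hg : ∀ n, Measurable (Function.uncurry (g n))) {x₀ : γ} (hX0 : ∀ ω, X 0 ω = x₀)
    (hXrec : ∀ n ω, X (n + 1) ω = g n (X n ω) (ξ n ω)) (n : ℕ) :
    IndepFun (X n) (ξ n) μ :=
  hξ.indepFun_of_measurable_iSup hξ_meas Set.self_notMem_Iio
    (measurable_iSup_comap_of_eq_rec hg hX0 hXrec n)

end ProbabilityTheory

theorem splitting_scheme_mean_recursion_general
    {Ω : Type*} [MeasurableSpace Ω] (μ : Measure Ω) [IsProbabilityMeasure μ]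
    (κ θ σ α : ℝ)
    (hα : α = (4 * κ * θ - σ ^ 2) / 8) (hα0 : 0 ≤ α)
    (h : ℕ → ℝ) (hh : ∀ n, 0 < h n)
    (ξ : ℕ → Ω → ℝ) (hξ_meas : ∀ n, Measurable (ξ n))
    (hξ_indep : iIndepFun (m := fun _ => Real.measurableSpace) ξ μ)
    (hξ_law : ∀ n, Measure.map (ξ n) μ = gaussianReal 0 (h (n + 1)).toNNReal)
    (x₀ : ℝ) (hx₀ : 0 ≤ x₀)
    (X : ℕ → Ω → ℝ) (hX0 : ∀ ω, X 0 ω = x₀)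
    (hXrec : ∀ n ω, X (n + 1) ω =
      Real.exp (-κ * h (n + 1)) *
        (Real.sqrt (X n ω + 2 * α * h (n + 1)) + σ / 2 * ξ n ω) ^ 2) :
    ∀ n, (∀ ω, 0 ≤ X n ω) ∧ Integrable (X n) μ ∧
      ∫ ω, X (n + 1) ω ∂μ =
        Real.exp (-κ * h (n + 1)) * ((∫ ω, X n ω ∂μ) + κ * θ * h (n + 1)) := by
  have hξ_law' : ∀ n, HasLaw (ξ n) (gaussianReal 0 (h (n + 1)).toNNReal) μ :=
    fun n => ⟨(hξ_meas n).aemeasurable, hξ_law n⟩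
  have hX_nonneg : ∀ n ω, 0 ≤ X n ω := by
    rintro (_ | n) ω
    · rw [hX0]; exact hx₀
    · rw [hXrec]; positivity
  have hstep : ∀ n, Integrable (X n) μ → Integrable (X (n + 1)) μ ∧
      ∫ ω, X (n + 1) ω ∂μ = Real.exp (-κ * h (n + 1)) * ((∫ ω, X n ω ∂μ) + κ * θ * h (n + 1)) := by
    intro n hint
    have hind : IndepFun (X n) (ξ n) μ := hξ_indep.indepFun_of_eq_rec hξ_meas
      (g := fun n x z => Real.exp (-κ * h (n + 1)) *
        (Real.sqrt (x + 2 * α * h (n + 1)) + σ / 2 * z) ^ 2) (fun n => by fun_prop) hX0 hXrec n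
    obtain ⟨hint_succ, hmean⟩ := hind.integral_sqrt_add_add_mul_sq (hX_nonneg n) hint
      (hξ_law' n).hasGaussianLaw.memLp_two (hξ_law' n).integral_eq_zero_of_gaussianReal
      (d := 2 * α * h (n + 1)) (by have := hh (n + 1); positivity) (σ / 2)
    rw [funext (hXrec n)]
    refine ⟨hint_succ.const_mul _, ?_⟩
    rw [integral_const_mul, hmean, (hξ_law' n).integral_sq_of_gaussianReal,
      Real.coe_toNNReal _ (hh (n + 1)).le, hα]
    ring
  have hint : ∀ n, Integrable (X n) μ := fun n => by
    induction n with
    | zero => rw [funext hX0]; exact integrable_const x₀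
    | succ n ih => exact (hstep n ih).1
  exact fun n => ⟨hX_nonneg n, hint n, (hstep n (hint n)).2⟩

/-- Exact mean recursion for the CIR splitting scheme on a deterministic mesh:
with `α = (4κθ − σ²)/8 ≥ 0`, `ξ_n ~ N(0, h(n+1))` independent, and
`X_{n+1} = e^{−κh(n+1)}(√(X_n + 2αh(n+1)) + (σ/2)ξ_n)²`, every `X_n` is
nonnegative and integrable and `E[X_{n+1}] = e^{−κh(n+1)}(E[X_n] + κθh(n+1))`. -/
theorem splitting_scheme_mean_recursion
    {Ω : Type*} [MeasurableSpace Ω] (μ : Measure Ω) [IsProbabilityMeasure μ]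
    (κ θ σ α : ℝ) (hκ : 0 < κ) (hθ : 0 < θ) (hσ : 0 < σ)
    (hα : α = (4 * κ * θ - σ ^ 2) / 8) (hα0 : 0 ≤ α)
    (N : ℕ) (h : ℕ → ℝ) (hh : ∀ n, 0 < h n)
    (ξ : ℕ → Ω → ℝ) (hξ_meas : ∀ n, Measurable (ξ n))
    (hξ_indep : iIndepFun (m := fun _ => Real.measurableSpace) ξ μ)
    (hξ_law : ∀ n, Measure.map (ξ n) μ = gaussianReal 0 (h (n + 1)).toNNReal)
    (x₀ : ℝ) (hx₀ : 0 ≤ x₀)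
    (X : ℕ → Ω → ℝ) (hX0 : ∀ ω, X 0 ω = x₀)
    (hXrec : ∀ n ω, X (n + 1) ω =
      Real.exp (-κ * h (n + 1)) *
        (Real.sqrt (X n ω + 2 * α * h (n + 1)) + σ / 2 * ξ n ω) ^ 2) :
    ∀ n, (∀ ω, 0 ≤ X n ω) ∧ Integrable (X n) μ ∧
      ∫ ω, X (n + 1) ω ∂μ =
        Real.exp (-κ * h (n + 1)) * ((∫ ω, X n ω ∂μ) + κ * θ * h (n + 1)) :=
  splitting_scheme_mean_recursion_general μ κ θ σ α hα hα0 h hh ξ hξ_meas hξ_indep hξ_law x₀ hx₀ X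
    hX0 hXrec
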